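/- Let H : ℝ × ℝ² → ℝ be smooth with H(s, x + 2π, ξ) = H(s, x, ξ) (a time-dependent Hamiltonian on the cylinder T*S¹), and let Φ : ℝ × ℝ² → ℝ² be a Hamiltonian flow of H, i.e. Φ(0, z) = z and ∂_s Φ(s, z) = (∂_ξ H(s, Φ(s, z)), −∂_x H(s, Φ(s, z))), satisfying the equivariance Φ(s, z + (2π, 0)) = Φ(s, z) + (2π, 0). Let γ : ℝ → ℝ² be smooth with γ(t + 2π) = γ(t) + (2π, 0) (a non-contractible loop in the cylinder with winding number 1). Then s ↦ ∫₀^{2π} Φ₂(s, γ(t)) · (d/dt)[Φ₁(s, γ(t))] dt is constant in s; that is, the Liouville class 2π I₀ = ∮_γ ξ dx of a non-contractible loop in T*S¹ is a Hamiltonian invariant. -/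

import Mathlib

open Real Set

private lemma clm_apply_pair' (L : (ℝ × ℝ) →L[ℝ] ℝ) (v : ℝ × ℝ) :
    L v = v.1 * L (1, 0) + v.2 * L (0, 1) := by
  have h : v = v.1 • ((1:ℝ), (0:ℝ)) + v.2 • ((0:ℝ), (1:ℝ)) := by
    simp [Prod.ext_iff]
  rw [h, map_add, map_smul, map_smul, smul_eq_mul, smul_eq_mul]
  simp [h.symm]


private lemma hasDerivAt_fst'' {X : Type*} [NormedAddCommGroup X] [NormedSpace ℝ X]
    {f : ℝ → X × X} {v : X × X} {t : ℝ} (h : HasDerivAt f v t) :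
    HasDerivAt (fun u => (f u).1) v.1 t := by
  exact (hasFDerivAt_fst (𝕜 := ℝ)).comp_hasDerivAt t h

private lemma hasDerivAt_snd'' {X : Type*} [NormedAddCommGroup X] [NormedSpace ℝ X]
    {f : ℝ → X × X} {v : X × X} {t : ℝ} (h : HasDerivAt f v t) :
    HasDerivAt (fun u => (f u).2) v.2 t := by
  exact (hasFDerivAt_snd (𝕜 := ℝ)).comp_hasDerivAt t h

/-- The Liouville class `∮ ξ dx` of a non-contractible loop of winding number 1 in the
cylinder `T*S¹` is invariant under Hamiltonian flows of the cylinder. -/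
theorem liouville_class_hamiltonian_invariant_cylinder
    (H : ℝ × (ℝ × ℝ) → ℝ) (hH : ContDiff ℝ (⊤ : ℕ∞) H)
    (hHper : ∀ s x ξ : ℝ, H (s, (x + 2 * π, ξ)) = H (s, (x, ξ)))
    (Φ : ℝ × (ℝ × ℝ) → ℝ × ℝ) (hΦ : ContDiff ℝ (⊤ : ℕ∞) Φ)
    (hΦ0 : ∀ z : ℝ × ℝ, Φ (0, z) = z)
    (hflow : ∀ (s : ℝ) (z : ℝ × ℝ), HasDerivAt (fun s' => Φ (s', z))
      ((fderiv ℝ (fun w => H (s, w)) (Φ (s, z))) (0, 1),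
       -(fderiv ℝ (fun w => H (s, w)) (Φ (s, z))) (1, 0)) s)
    (hΦequiv : ∀ (s : ℝ) (z : ℝ × ℝ), Φ (s, z + (2 * π, 0)) = Φ (s, z) + (2 * π, 0))
    (γ : ℝ → ℝ × ℝ) (hγ : ContDiff ℝ (⊤ : ℕ∞) γ)
    (hγper : ∀ t, γ (t + 2 * π) = γ t + (2 * π, 0)) :
    ∀ s₁ s₂ : ℝ,
      (∫ t in (0:ℝ)..(2 * π), (Φ (s₁, γ t)).2 * deriv (fun u => (Φ (s₁, γ u)).1) t)
        = ∫ t in (0:ℝ)..(2 * π), (Φ (s₂, γ t)).2 * deriv (fun u => (Φ (s₂, γ u)).1) t := by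
  intro s₁ s₂
  -- the composite map Ψ(s,t) = Φ(s, γ t) and its derivatives
  have hΨc : ContDiff ℝ (⊤ : ℕ∞) (fun p : ℝ × ℝ => Φ (p.1, γ p.2)) :=
    hΦ.comp (contDiff_fst.prodMk (hγ.comp contDiff_snd))
  set Ψ : ℝ × ℝ → ℝ × ℝ := fun p => Φ (p.1, γ p.2) with hΨdef
  set F : ℝ × ℝ → (ℝ × ℝ) →L[ℝ] (ℝ × ℝ) := fderiv ℝ Ψ with hFdef
  have hFc : ContDiff ℝ (⊤ : ℕ∞) F := hΨc.fderiv_right (by simp)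
  set F' : ℝ × ℝ → (ℝ × ℝ) →L[ℝ] ((ℝ × ℝ) →L[ℝ] (ℝ × ℝ)) := fderiv ℝ F with hF'def
  have hF'c : ContDiff ℝ (⊤ : ℕ∞) F' := hFc.fderiv_right (by simp)
  have hΨd : ∀ p, HasFDerivAt Ψ (F p) p := fun p => (hΨc.differentiable (by simp) p).hasFDerivAt
  have hFd : ∀ p, HasFDerivAt F (F' p) p := fun p => (hFc.differentiable (by simp) p).hasFDerivAt
  have hsymm : ∀ p : ℝ × ℝ, ∀ v w, F' p v w = F' p w v :=
    fun p => second_derivative_symmetric hΨd (hFd p)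
  -- curves s ↦ (s,t) and t ↦ (s,t)
  have hcS : ∀ s t : ℝ, HasDerivAt (fun u : ℝ => (u, t)) ((1:ℝ), (0:ℝ)) s :=
    fun s t => (hasDerivAt_id s).prodMk (hasDerivAt_const s t)
  have hcT : ∀ s t : ℝ, HasDerivAt (fun u : ℝ => (s, u)) ((0:ℝ), (1:ℝ)) t :=
    fun s t => (hasDerivAt_const t s).prodMk (hasDerivAt_id t)
  -- partial derivatives of Ψ
  have hSder : ∀ s t, HasDerivAt (fun s' => Ψ (s', t)) (F (s, t) (1, 0)) s := by
    intro s t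
    simpa [Function.comp_def] using (hΨd (s, t)).comp_hasDerivAt s (hcS s t)
  have hTder : ∀ s t, HasDerivAt (fun u => Ψ (s, u)) (F (s, t) (0, 1)) t := by
    intro s t
    simpa [Function.comp_def] using (hΨd (s, t)).comp_hasDerivAt t (hcT s t)
  -- the flow equation in terms of F
  have hXH : ∀ s t, F (s, t) (1, 0) =
      ((fderiv ℝ (fun w => H (s, w)) (Ψ (s, t))) (0, 1),
       -(fderiv ℝ (fun w => H (s, w)) (Ψ (s, t))) (1, 0)) := by
    intro s t
    exact (hSder s t).unique (hflow s (γ t))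
  -- mixed partial derivatives
  have hmixS : ∀ s t, HasDerivAt (fun s' => F (s', t) (0, 1)) (F' (s, t) (1, 0) (0, 1)) s := by
    intro s t
    have h1 : HasDerivAt (fun s' => F (s', t)) (F' (s, t) (1, 0)) s := by
      simpa [Function.comp_def] using (hFd (s, t)).comp_hasDerivAt s (hcS s t)
    simpa using h1.clm_apply (hasDerivAt_const s ((0:ℝ), (1:ℝ)))
  have hmixT : ∀ s t, HasDerivAt (fun u => F (s, u) (1, 0)) (F' (s, t) (0, 1) (1, 0)) t := by
    intro s t
    have h1 : HasDerivAt (fun u => F (s, u)) (F' (s, t) (0, 1)) t := by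
      simpa [Function.comp_def] using (hFd (s, t)).comp_hasDerivAt t (hcT s t)
    simpa using h1.clm_apply (hasDerivAt_const t ((1:ℝ), (0:ℝ)))
  -- the integrand and its s-derivative
  set G : ℝ → ℝ → ℝ := fun s t => (Ψ (s, t)).2 * (F (s, t) (0, 1)).1 with hGdef
  set D : ℝ × ℝ → ℝ := fun p =>
    (F p (1, 0)).2 * (F p (0, 1)).1 + (Ψ p).2 * ((F' p (1, 0)) (0, 1)).1 with hDdef
  have hGder : ∀ s t, HasDerivAt (fun s' => G s' t) (D (s, t)) s := by
    intro s t
    exact (hasDerivAt_snd'' (hSder s t)).mul (hasDerivAt_fst'' (hmixS s t))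
  -- the primitive K and its t-derivative
  set K : ℝ → ℝ → ℝ := fun s t =>
    (Ψ (s, t)).2 * (F (s, t) (1, 0)).1 - H (s, Ψ (s, t)) with hKdef
  have hHs : ∀ s : ℝ, ContDiff ℝ (⊤ : ℕ∞) (fun w => H (s, w)) :=
    fun s => hH.comp (contDiff_const.prodMk contDiff_id)
  have hHcomp : ∀ s t, HasDerivAt (fun u => H (s, Ψ (s, u)))
      ((fderiv ℝ (fun w => H (s, w)) (Ψ (s, t))) (F (s, t) (0, 1))) t := by
    intro s t
    simpa [Function.comp_def] using
      (((hHs s).differentiable (by simp) (Ψ (s, t))).hasFDerivAt).comp_hasDerivAt t (hTder s t)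
  have hKder : ∀ s t, HasDerivAt (fun u => K s u) (D (s, t)) t := by
    intro s t
    have h1 : HasDerivAt (fun u => K s u)
        ((F (s, t) (0, 1)).2 * (F (s, t) (1, 0)).1
          + (Ψ (s, t)).2 * (F' (s, t) (0, 1) (1, 0)).1
          - (fderiv ℝ (fun w => H (s, w)) (Ψ (s, t))) (F (s, t) (0, 1))) t :=
      ((hasDerivAt_snd'' (hTder s t)).mul (hasDerivAt_fst'' (hmixT s t))).sub (hHcomp s t)
    convert h1 using 1
    set L := fderiv ℝ (fun w => H (s, w)) (Ψ (s, t)) with hL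
    have e1 : (F (s, t) (1, 0)).1 = L (0, 1) := by rw [hXH s t]
    have e2 : (F (s, t) (1, 0)).2 = -L (1, 0) := by rw [hXH s t]
    have e3 : (F' (s, t) (0, 1)) (1, 0) = (F' (s, t) (1, 0)) (0, 1) := hsymm _ _ _
    have e4 : L (F (s, t) (0, 1)) =
        (F (s, t) (0, 1)).1 * L (1, 0) + (F (s, t) (0, 1)).2 * L (0, 1) :=
      clm_apply_pair' L _
    simp only [hDdef, e1, e2, e3, e4]
    ring
  -- continuity of everything in sight
  have hΨcont : Continuous Ψ := hΨc.continuous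
  have hFcont : Continuous F := hFc.continuous
  have hF'cont : Continuous F' := hF'c.continuous
  have hDcont : Continuous D := by
    apply Continuous.add
    · exact ((hFcont.clm_apply continuous_const).snd).mul
        ((hFcont.clm_apply continuous_const).fst)
    · exact (hΨcont.snd).mul
        (((hF'cont.clm_apply continuous_const).clm_apply continuous_const).fst)
  have hGcont : Continuous (fun p : ℝ × ℝ => G p.1 p.2) :=
    (hΨcont.snd).mul ((hFcont.clm_apply continuous_const).fst)
  -- periodicity facts
  have hHper' : ∀ (s : ℝ) (w : ℝ × ℝ), H (s, w + (2 * π, 0)) = H (s, w) := by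
    intro s w
    have h1 : w + ((2 * π : ℝ), (0 : ℝ)) = (w.1 + 2 * π, w.2) := by
      simp [Prod.ext_iff]
    rw [h1, hHper s w.1 w.2]
  have hLper : ∀ (s : ℝ) (w : ℝ × ℝ),
      fderiv ℝ (fun w' => H (s, w')) (w + (2 * π, 0)) = fderiv ℝ (fun w' => H (s, w')) w := by
    intro s w
    have hd : HasFDerivAt (fun w' => H (s, w'))
        (fderiv ℝ (fun w' => H (s, w')) (w + (2 * π, 0))) (w + (2 * π, 0)) :=
      ((hHs s).differentiable (by simp) _).hasFDerivAt
    have hcomp : HasFDerivAt (fun w' : ℝ × ℝ => H (s, w' + (2 * π, 0)))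
        (fderiv ℝ (fun w' => H (s, w')) (w + (2 * π, 0))) w := by
      have := hd.comp w ((hasFDerivAt_id w).add_const ((2 * π : ℝ), (0 : ℝ)))
      simpa [Function.comp_def] using this
    have heq : (fun w' : ℝ × ℝ => H (s, w' + (2 * π, 0))) = fun w' => H (s, w') := by
      funext w'; exact hHper' s w'
    rw [heq] at hcomp
    exact (hcomp.fderiv).symm
  have hγ2π : γ (2 * π) = γ 0 + (2 * π, 0) := by
    have := hγper 0; rwa [zero_add] at this
  have hΨper : ∀ s, Ψ (s, 2 * π) = Ψ (s, 0) + (2 * π, 0) := by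
    intro s
    show Φ (s, γ (2 * π)) = Φ (s, γ 0) + (2 * π, 0)
    rw [hγ2π, hΦequiv]
  have hKper : ∀ s, K s (2 * π) = K s 0 := by
    intro s
    have h2 : (Ψ (s, 2 * π)).2 = (Ψ (s, 0)).2 := by rw [hΨper s]; simp
    have hL2 : fderiv ℝ (fun w => H (s, w)) (Ψ (s, 2 * π))
        = fderiv ℝ (fun w => H (s, w)) (Ψ (s, 0)) := by
      rw [hΨper s]; exact hLper s _
    have h1 : (F (s, 2 * π) (1, 0)).1 = (F (s, 0) (1, 0)).1 := by
      rw [hXH s (2 * π), hXH s 0, hL2]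
    have hHeq : H (s, Ψ (s, 2 * π)) = H (s, Ψ (s, 0)) := by
      rw [hΨper s, hHper']
    simp only [hKdef, h1, h2, hHeq]
  -- the action integral and its derivative
  set A : ℝ → ℝ := fun s => ∫ t in (0:ℝ)..(2 * π), G s t with hAdef
  have hπ : (0:ℝ) ≤ 2 * π := by positivity
  have hIoc : Set.uIoc (0:ℝ) (2 * π) = Ioc (0:ℝ) (2 * π) := uIoc_of_le hπ
  have hDint0 : ∀ s, (∫ t in (0:ℝ)..(2 * π), D (s, t)) = 0 := by
    intro s
    have h := intervalIntegral.integral_eq_sub_of_hasDerivAt (a := (0:ℝ)) (b := 2 * π)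
      (f := fun u => K s u) (f' := fun t => D (s, t))
      (fun t _ => hKder s t)
      ((hDcont.comp (Continuous.prodMk_right s)).intervalIntegrable 0 (2 * π))
    rw [h]
    show K s (2 * π) - K s 0 = 0
    rw [hKper s, sub_self]
  have hAder : ∀ s₀ : ℝ, HasDerivAt A 0 s₀ := by
    intro s₀
    obtain ⟨M, hM⟩ := ((isCompact_closedBall s₀ 1).prod
      (isCompact_Icc (a := (0:ℝ)) (b := 2 * π))).exists_bound_of_continuousOn
      hDcont.continuousOn
    have key := intervalIntegral.hasDerivAt_integral_of_dominated_loc_of_deriv_le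
      (F := G) (F' := fun s t => D (s, t)) (x₀ := s₀) (a := (0:ℝ)) (b := 2 * π)
      (bound := fun _ => M) (s := Metric.ball s₀ 1) (μ := MeasureTheory.volume) (Metric.ball_mem_nhds s₀ one_pos)
      (Filter.Eventually.of_forall fun x =>
        ((hGcont.comp (Continuous.prodMk_right x)).aestronglyMeasurable))
      ((hGcont.comp (Continuous.prodMk_right s₀)).intervalIntegrable _ _)
      ((hDcont.comp (Continuous.prodMk_right s₀)).aestronglyMeasurable)
      (Filter.Eventually.of_forall fun t ht x hx => by
        refine hM (x, t) ⟨Metric.ball_subset_closedBall hx, ?_⟩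
        rw [hIoc] at ht
        exact Ioc_subset_Icc_self ht)
      (intervalIntegrable_const)
      (Filter.Eventually.of_forall fun t ht x hx => hGder x t)
    have h2 := key.2
    rwa [hDint0 s₀] at h2
  have hconst : A s₁ = A s₂ :=
    is_const_of_deriv_eq_zero (fun s => (hAder s).differentiableAt)
      (fun s => (hAder s).deriv) s₁ s₂
  -- identify the original integrals with A
  have hint_eq : ∀ s : ℝ,
      (∫ t in (0:ℝ)..(2 * π), (Φ (s, γ t)).2 * deriv (fun u => (Φ (s, γ u)).1) t) = A s := by
    intro s
    apply intervalIntegral.integral_congr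
    intro t _
    show (Φ (s, γ t)).2 * deriv (fun u => (Φ (s, γ u)).1) t = G s t
    have hd : deriv (fun u => (Φ (s, γ u)).1) t = (F (s, t) (0, 1)).1 :=
      (hasDerivAt_fst'' (hTder s t)).deriv
    rw [hd]
  rw [hint_eq s₁, hint_eq s₂]
  exact hconst
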